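/- arXiv:2106.06932 — 2 statements merged into one kernel-verified Lean document; each statement's English description precedes it below -/
import Mathlib

section
/- (Gap between policy gradient and the Actor_o update.) Fix q ∈ ℝ^{S×A} and define the actor objective J_π(θ) := (1−γ) μ0ᵀ Π_θ q and the occupancy-weighted residual G(θ) := d_θᵀ (r − Ψ_θ q). Then J_π and G are differentiable and ∇_θ J(θ) = ∇_θ J_π(θ) + ∇_θ G(θ); i.e., the gap between the true policy gradient and the Actor_o gradient ∂_θ J_π equals the gradient of θ ↦ E_{(s,a)∼d_θ}[δ_θ(s,a)], where δ_θ := r − Ψ_θ q is the Bellman residual of the fixed critic q. -/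
/-!
The occupancy measure solves the flow equation `Ψ(π)ᵀ d(π) = (1-γ) Π(π)ᵀ μ0`, hence
`d_θᵀ Ψ_θ q = (1-γ) μ0ᵀ Π_θ q` and `J = J_π + G` holds identically in `θ`; differentiating this
identity gives the claim. The off-diagonal part `γ P Π_θ` of `Ψ_θ` is nonnegative with row sums
`γ < 1`, so `Ψ_θ` is strictly diagonally dominant, hence invertible, and by Cramer's rule the
entries of `Ψ_θ⁻¹`, and with them `d_θ`, depend differentiably on `θ`.
-/

open Matrix

noncomputable section

variable {S A : Type*} [Fintype S] [Fintype A] [DecidableEq S] [DecidableEq A]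
  [Nonempty S] [Nonempty A]

/-- A policy: nonnegative entries, and for each state the action probabilities sum to one. -/
def IsPolicy (x : S × A → ℝ) : Prop :=
  (∀ p, 0 ≤ x p) ∧ ∀ s : S, ∑ a : A, x (s, a) = 1

/-- A row-stochastic transition matrix. -/
def IsStochasticMat (P : Matrix (S × A) S ℝ) : Prop :=
  (∀ p s, 0 ≤ P p s) ∧ ∀ p, ∑ s : S, P p s = 1

/-- A probability vector on states. -/
def IsProbVec (μ : S → ℝ) : Prop :=
  (∀ s, 0 ≤ μ s) ∧ ∑ s : S, μ s = 1

/-- The block policy matrix `Π(x) ∈ ℝ^{S × (S×A)}`. -/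
def piMat (x : S × A → ℝ) : Matrix S (S × A) ℝ :=
  Matrix.of fun s p => if p.1 = s then x p else 0

/-- The action-marginalization matrix `Ξ ∈ ℝ^{S × (S×A)}`. -/
def xiMat : Matrix S (S × A) ℝ :=
  Matrix.of fun s p => if p.1 = s then (1 : ℝ) else 0

/-- `Ψ(x) = I - γ P Π(x)`. -/
def psiMat (P : Matrix (S × A) S ℝ) (γ : ℝ) (x : S × A → ℝ) :
    Matrix (S × A) (S × A) ℝ :=
  1 - γ • (P * piMat x)

/-- The discounted state-action occupancy `d(x) = (1-γ)(Ψ(x)ᵀ)⁻¹ Π(x)ᵀ μ0`. -/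
def dOcc (P : Matrix (S × A) S ℝ) (γ : ℝ) (μ0 : S → ℝ) (x : S × A → ℝ) :
    S × A → ℝ :=
  (1 - γ) • (((psiMat P γ x)ᵀ)⁻¹ *ᵥ ((piMat x)ᵀ *ᵥ μ0))

section Differentiability

variable {𝕜 E ι κ : Type*} [NontriviallyNormedField 𝕜] [NormedAddCommGroup E] [NormedSpace 𝕜 E]
  [Fintype κ]

theorem Differentiable.dotProduct {f g : E → κ → 𝕜} (hf : Differentiable 𝕜 f)
    (hg : Differentiable 𝕜 g) : Differentiable 𝕜 fun x => f x ⬝ᵥ g x := by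
  have hf' := differentiable_pi.1 hf
  have hg' := differentiable_pi.1 hg
  show Differentiable 𝕜 fun x => ∑ i, f x i * g x i
  fun_prop

theorem differentiable_mulVec {M : E → Matrix ι κ 𝕜} {v : E → κ → 𝕜}
    (hM : ∀ i j, Differentiable 𝕜 fun x => M x i j) (hv : Differentiable 𝕜 v) :
    Differentiable 𝕜 fun x => M x *ᵥ v x :=
  differentiable_pi.2 fun i => (differentiable_pi.2 (hM i)).dotProduct hv

theorem differentiable_det [DecidableEq κ] {M : E → Matrix κ κ 𝕜}
    (hM : ∀ i j, Differentiable 𝕜 fun x => M x i j) :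
    Differentiable 𝕜 fun x => (M x).det := by
  simp only [det_apply]
  fun_prop

theorem differentiable_inv_apply [DecidableEq κ] {M : E → Matrix κ κ 𝕜}
    (hM : ∀ i j, Differentiable 𝕜 fun x => M x i j) (hdet : ∀ x, (M x).det ≠ 0) (i j : κ) :
    Differentiable 𝕜 fun x => (M x)⁻¹ i j := by
  have cramer : (fun x => (M x)⁻¹ i j)
      = fun x => ((M x).det)⁻¹ * ((M x).updateRow j (Pi.single i 1)).det := by
    funext x
    rw [inv_def, Matrix.smul_apply, adjugate_apply, Ring.inverse_eq_inv', smul_eq_mul]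
  rw [cramer]
  refine ((differentiable_det hM).inv hdet).mul (differentiable_det fun k l => ?_)
  by_cases hk : k = j
  · simp [hk]
  · simpa [updateRow_ne hk] using hM k l

end Differentiability

theorem det_one_sub_ne_zero_of_sum_norm_lt_one {K ι : Type*} [NormedField K] [Fintype ι]
    [DecidableEq ι] (M : Matrix ι ι K) (hM : ∀ i, ∑ j, ‖M i j‖ < 1) : (1 - M).det ≠ 0 := by
  refine det_ne_zero_of_sum_row_lt_diag fun i => ?_
  have off_diag :
      ∑ j ∈ Finset.univ.erase i, ‖(1 - M) i j‖ = ∑ j ∈ Finset.univ.erase i, ‖M i j‖ :=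
    Finset.sum_congr rfl fun j hj => by
      rw [Matrix.sub_apply, one_apply_ne (Finset.ne_of_mem_erase hj).symm, zero_sub, norm_neg]
  have diag : 1 - ‖M i i‖ ≤ ‖(1 - M) i i‖ := by
    simpa [Matrix.sub_apply, one_apply_eq] using norm_sub_norm_le (1 : K) (M i i)
  calc ∑ j ∈ Finset.univ.erase i, ‖(1 - M) i j‖
      = ∑ j, ‖M i j‖ - ‖M i i‖ := by rw [off_diag, Finset.sum_erase_eq_sub (Finset.mem_univ i)]
    _ < 1 - ‖M i i‖ := by linarith [hM i]
    _ ≤ ‖(1 - M) i i‖ := diag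

theorem mul_piMat_apply {ι : Type*} (P : Matrix ι S ℝ) (x : S × A → ℝ) (i : ι) (p : S × A) :
    (P * piMat x) i p = P i p.1 * x p := by
  simp [mul_apply, piMat]

theorem sum_mul_piMat_apply {ι : Type*} {P : Matrix ι S ℝ} (hP : ∀ i, ∑ s, P i s = 1)
    {x : S × A → ℝ} (hx : IsPolicy x) (i : ι) : ∑ p, (P * piMat x) i p = 1 := by
  simp only [mul_piMat_apply, Fintype.sum_prod_type, ← Finset.mul_sum, hx.2, mul_one, hP i]

theorem det_psiMat_ne_zero {P : Matrix (S × A) S ℝ} (hP : IsStochasticMat P) {γ : ℝ}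
    (hγ0 : 0 ≤ γ) (hγ1 : γ < 1) {x : S × A → ℝ} (hx : IsPolicy x) :
    (psiMat P γ x).det ≠ 0 := by
  refine det_one_sub_ne_zero_of_sum_norm_lt_one _ fun p => ?_
  have entry_nonneg : ∀ p', 0 ≤ (γ • (P * piMat x)) p p' := fun p' => by
    rw [Matrix.smul_apply, mul_piMat_apply, smul_eq_mul]
    exact mul_nonneg hγ0 (mul_nonneg (hP.1 _ _) (hx.1 _))
  calc ∑ p', ‖(γ • (P * piMat x)) p p'‖ = ∑ p', γ * (P * piMat x) p p' :=
        Finset.sum_congr rfl fun p' _ => Real.norm_of_nonneg (entry_nonneg p')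
    _ = γ * ∑ p', (P * piMat x) p p' := (Finset.mul_sum _ _ _).symm
    _ < 1 := by rw [sum_mul_piMat_apply hP.2 hx, mul_one]; exact hγ1

section Occupancy

variable {P : Matrix (S × A) S ℝ} {γ : ℝ} {μ0 : S → ℝ} {x : S × A → ℝ}

theorem psiMat_transpose_mulVec_dOcc (h : (psiMat P γ x).det ≠ 0) :
    (psiMat P γ x)ᵀ *ᵥ dOcc P γ μ0 x = (1 - γ) • ((piMat x)ᵀ *ᵥ μ0) := by
  have hu : IsUnit (psiMat P γ x)ᵀ.det := by rwa [det_transpose, isUnit_iff_ne_zero]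
  rw [dOcc, mulVec_smul, mulVec_mulVec, mul_nonsing_inv _ hu, one_mulVec]

theorem dOcc_dotProduct_psiMat_mulVec (h : (psiMat P γ x).det ≠ 0) (q : S × A → ℝ) :
    dOcc P γ μ0 x ⬝ᵥ (psiMat P γ x *ᵥ q) = (1 - γ) * (μ0 ⬝ᵥ (piMat x *ᵥ q)) := by
  rw [dotProduct_mulVec, ← mulVec_transpose, psiMat_transpose_mulVec_dOcc h, smul_dotProduct,
    smul_eq_mul, mulVec_transpose, ← dotProduct_mulVec]

theorem dOcc_dotProduct_sub_psiMat_mulVec (h : (psiMat P γ x).det ≠ 0) (r q : S × A → ℝ) :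
    dOcc P γ μ0 x ⬝ᵥ (r - psiMat P γ x *ᵥ q)
      = dOcc P γ μ0 x ⬝ᵥ r - (1 - γ) * (μ0 ⬝ᵥ (piMat x *ᵥ q)) := by
  rw [dotProduct_sub, dOcc_dotProduct_psiMat_mulVec h]

end Occupancy

section ParametrizedPolicy

variable {E : Type*} [NormedAddCommGroup E] [NormedSpace ℝ E] {π : E → S × A → ℝ}

theorem differentiable_piMat_apply (hπ : Differentiable ℝ π) (s : S) (p : S × A) :
    Differentiable ℝ fun θ => piMat (π θ) s p := by
  by_cases hs : p.1 = s
  · simpa [piMat, hs] using differentiable_pi.1 hπ p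
  · simp [piMat, hs]

theorem differentiable_psiMat_apply (P : Matrix (S × A) S ℝ) (γ : ℝ) (hπ : Differentiable ℝ π)
    (p p' : S × A) : Differentiable ℝ fun θ => psiMat P γ (π θ) p p' := by
  have hpiMat := differentiable_piMat_apply hπ
  simp only [psiMat, Matrix.sub_apply, Matrix.smul_apply, mul_apply, smul_eq_mul]
  fun_prop

theorem differentiable_dOcc {P : Matrix (S × A) S ℝ} (hP : IsStochasticMat P) {γ : ℝ}
    (hγ0 : 0 ≤ γ) (hγ1 : γ < 1) (μ0 : S → ℝ) (hpol : ∀ θ, IsPolicy (π θ))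
    (hπ : Differentiable ℝ π) : Differentiable ℝ fun θ => dOcc P γ μ0 (π θ) := by
  have hΨinv := differentiable_inv_apply (M := fun θ => (psiMat P γ (π θ))ᵀ)
    (fun p p' => differentiable_psiMat_apply P γ hπ p' p)
    (fun θ => by rw [det_transpose]; exact det_psiMat_ne_zero hP hγ0 hγ1 (hpol θ))
  have hweights := differentiable_mulVec (M := fun θ => (piMat (π θ))ᵀ)
    (fun p s => differentiable_piMat_apply hπ s p) (differentiable_const μ0)
  exact (differentiable_mulVec hΨinv hweights).const_smul (1 - γ)

end ParametrizedPolicy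

theorem pg_actor_o_gap_general
    (P : Matrix (S × A) S ℝ) (hP : IsStochasticMat P)
    (γ : ℝ) (hγ0 : 0 ≤ γ) (hγ1 : γ < 1)
    (r : S × A → ℝ) (μ0 : S → ℝ)
    {n : ℕ} (π : (Fin n → ℝ) → S × A → ℝ)
    (hpol : ∀ θ, IsPolicy (π θ)) (hdiff : Differentiable ℝ π)
    (q : S × A → ℝ) :
    Differentiable ℝ (fun θ => (1 - γ) * (μ0 ⬝ᵥ (piMat (π θ) *ᵥ q))) ∧
    Differentiable ℝ (fun θ => dOcc P γ μ0 (π θ) ⬝ᵥ (r - psiMat P γ (π θ) *ᵥ q)) ∧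
    ∀ θ : Fin n → ℝ,
      fderiv ℝ (fun t => dOcc P γ μ0 (π t) ⬝ᵥ r) θ
        = fderiv ℝ (fun t => (1 - γ) * (μ0 ⬝ᵥ (piMat (π t) *ᵥ q))) θ
          + fderiv ℝ (fun t => dOcc P γ μ0 (π t) ⬝ᵥ (r - psiMat P γ (π t) *ᵥ q)) θ := by
  have hJ : Differentiable ℝ fun θ => dOcc P γ μ0 (π θ) ⬝ᵥ r :=
    (differentiable_dOcc hP hγ0 hγ1 μ0 hpol hdiff).dotProduct (differentiable_const r)
  have hJπ : Differentiable ℝ fun θ => (1 - γ) * (μ0 ⬝ᵥ (piMat (π θ) *ᵥ q)) :=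
    ((differentiable_const μ0).dotProduct (differentiable_mulVec
      (differentiable_piMat_apply hdiff) (differentiable_const q))).const_mul _
  have gap : ∀ θ, dOcc P γ μ0 (π θ) ⬝ᵥ (r - psiMat P γ (π θ) *ᵥ q)
      = dOcc P γ μ0 (π θ) ⬝ᵥ r - (1 - γ) * (μ0 ⬝ᵥ (piMat (π θ) *ᵥ q)) := fun θ =>
    dOcc_dotProduct_sub_psiMat_mulVec (det_psiMat_ne_zero hP hγ0 hγ1 (hpol θ)) r q
  have hG : Differentiable ℝ fun θ => dOcc P γ μ0 (π θ) ⬝ᵥ (r - psiMat P γ (π θ) *ᵥ q) :=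
    funext gap ▸ hJ.sub hJπ
  refine ⟨hJπ, hG, fun θ => ?_⟩
  rw [← fderiv_fun_add (hJπ θ) (hG θ)]
  congr 1
  funext t
  rw [gap t]
  ring

/-- gap between policy gradient and the Actor_o update: for a fixed critic `q`,
the actor objective `J_π(θ) = (1-γ)μ0ᵀΠ_θ q` and residual term `G(θ) = d_θᵀ(r - Ψ_θ q)` are
differentiable, and `∇_θ J = ∇_θ J_π + ∇_θ G`. -/
theorem pg_actor_o_gap
    (P : Matrix (S × A) S ℝ) (hP : IsStochasticMat P)
    (γ : ℝ) (hγ0 : 0 ≤ γ) (hγ1 : γ < 1)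
    (r : S × A → ℝ) (μ0 : S → ℝ) (hμ0 : IsProbVec μ0)
    {n : ℕ} (π : (Fin n → ℝ) → S × A → ℝ)
    (hpol : ∀ θ, IsPolicy (π θ)) (hdiff : Differentiable ℝ π)
    (q : S × A → ℝ) :
    Differentiable ℝ (fun θ => (1 - γ) * (μ0 ⬝ᵥ (piMat (π θ) *ᵥ q))) ∧
    Differentiable ℝ (fun θ => dOcc P γ μ0 (π θ) ⬝ᵥ (r - psiMat P γ (π θ) *ᵥ q)) ∧
    ∀ θ : Fin n → ℝ,
      fderiv ℝ (fun t => dOcc P γ μ0 (π t) ⬝ᵥ r) θ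
        = fderiv ℝ (fun t => (1 - γ) * (μ0 ⬝ᵥ (piMat (π t) *ᵥ q))) θ
          + fderiv ℝ (fun t => dOcc P γ μ0 (π t) ⬝ᵥ (r - psiMat P γ (π t) *ᵥ q)) θ :=
  pg_actor_o_gap_general P hP γ hγ0 hγ1 r μ0 π hpol hdiff q
end
end

section
/- Fix θ₀ ∈ ℝ^n and q ∈ ℝ^{S×A}, and hold the occupancy d := d_{θ₀} fixed. Then the gradient at θ = θ₀ of the function θ ↦ (1−γ) μ0ᵀ Π_θ q + dᵀ (r − Ψ_θ q) equals H_{θ₀} Δ(Ξᵀ d_{S,θ₀}) q; i.e., the Actor_o gradient plus the derivative of the residual term with the occupancy held fixed recovers the classical actor-critic gradient Σ_s d_{S,θ₀}(s) Σ_a q(s,a) ∇_θ π_θ(s,a). -/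
/-!
With `d` held fixed the objective is affine in `π_θ`: it equals `dᵀ(r - q) + wᵀ Π_θ q` with
`w = (1 - γ) μ0 + γ Pᵀ d`, so its gradient is `H_θ` applied to `(w s * q (s, a))`. The occupancy
satisfies `Ψᵀ d = (1 - γ) Πᵀ μ0`, i.e. `d = Πᵀ w`, and `Ξ Πᵀ = 1` for a policy, so the state
occupancy is `d_S = Ξ d = w`. `Ψ` is invertible because `1 - γ P Π` is strictly diagonally
dominant when `P Π` is stochastic and `0 ≤ γ < 1`.
-/

open Matrix

noncomputable section

variable {S A : Type*} [Fintype S] [Fintype A] [DecidableEq S] [DecidableEq A]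
  [Nonempty S] [Nonempty A]

theorem Matrix.det_one_sub_smul_ne_zero {ι : Type*} [Fintype ι] [DecidableEq ι]
    {M : Matrix ι ι ℝ} (hM0 : ∀ i j, 0 ≤ M i j) (hM1 : ∀ i, ∑ j, M i j = 1)
    {γ : ℝ} (hγ0 : 0 ≤ γ) (hγ1 : γ < 1) : (1 - γ • M).det ≠ 0 := by
  refine det_ne_zero_of_sum_row_lt_diag fun k => ?_
  have hoff : ∑ j ∈ Finset.univ.erase k, ‖(1 - γ • M) k j‖ = γ * (1 - M k k) := by
    rw [← hM1 k, ← Finset.add_sum_erase _ _ (Finset.mem_univ k), add_sub_cancel_left,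
      Finset.mul_sum]
    refine Finset.sum_congr rfl fun j hj => ?_
    rw [sub_apply, one_apply_ne (Finset.ne_of_mem_erase hj).symm, smul_apply, smul_eq_mul,
      zero_sub, norm_neg, Real.norm_of_nonneg (mul_nonneg hγ0 (hM0 k j))]
  have hMkk : M k k ≤ 1 := hM1 k ▸ Finset.single_le_sum (fun j _ => hM0 k j) (Finset.mem_univ k)
  rw [hoff, sub_apply, one_apply_eq, smul_apply, smul_eq_mul,
    Real.norm_of_nonneg (by nlinarith)]
  nlinarith

theorem fderiv_const_add_dotProduct_apply {E ι : Type*} [NormedAddCommGroup E]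
    [NormedSpace ℝ E] [Fintype ι] {f : E → ι → ℝ} {x : E} (hf : DifferentiableAt ℝ f x)
    (C : ℝ) (c : ι → ℝ) (v : E) :
    fderiv ℝ (fun t => C + c ⬝ᵥ f t) x v = c ⬝ᵥ fderiv ℝ f x v := by
  have hderiv : HasFDerivAt (fun t => C + c ⬝ᵥ f t)
      (∑ i, c i • (ContinuousLinearMap.proj i).comp (fderiv ℝ f x)) x :=
    (HasFDerivAt.fun_sum fun i _ =>
      (hasFDerivAt_pi'.mp hf.hasFDerivAt i).const_mul (c i)).const_add C
  rw [hderiv.fderiv]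
  simp [dotProduct]

section Marginalization

omit [DecidableEq A] [Nonempty S] [Nonempty A]

omit [Fintype A] in
theorem xiMat_transpose_mulVec_apply (w : S → ℝ) (p : S × A) :
    ((xiMat : Matrix S (S × A) ℝ)ᵀ *ᵥ w) p = w p.1 := by
  simp [mulVec, dotProduct, xiMat]

theorem xiMat_mul_piMat_transpose {x : S × A → ℝ} (hx : ∀ s, ∑ a, x (s, a) = 1) :
    (xiMat : Matrix S (S × A) ℝ) * (piMat x)ᵀ = 1 := by
  ext s s'
  simp only [mul_apply, xiMat, piMat, transpose_apply, of_apply, Fintype.sum_prod_type, one_apply]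
  by_cases h : s = s'
  · simp [h, hx]
  · simp [h, Ne.symm h]

theorem dotProduct_piMat_mulVec (w : S → ℝ) (q x : S × A → ℝ) :
    w ⬝ᵥ (piMat x *ᵥ q) = (xiMatᵀ *ᵥ w * q) ⬝ᵥ x := by
  simp only [dotProduct, Pi.mul_apply, xiMat_transpose_mulVec_apply]
  simp only [mulVec, dotProduct, piMat, of_apply, Finset.mul_sum, ite_mul, zero_mul,
    mul_ite, mul_zero]
  rw [Finset.sum_comm]
  simp only [Finset.sum_ite_eq, Finset.mem_univ, if_true]
  exact Finset.sum_congr rfl fun p _ => by ring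

end Marginalization

section Occupancy

omit [Nonempty S] [Nonempty A]

theorem isUnit_det_psiMat {P : Matrix (S × A) S ℝ} (hP : IsStochasticMat P) {γ : ℝ}
    (hγ0 : 0 ≤ γ) (hγ1 : γ < 1) {x : S × A → ℝ} (hx : IsPolicy x) :
    IsUnit (psiMat P γ x).det := by
  have hentry : ∀ p p', (P * piMat x) p p' = P p p'.1 * x p' := fun p p' => by
    simp [mul_apply, piMat]
  refine isUnit_iff_ne_zero.mpr (det_one_sub_smul_ne_zero (fun p p' => ?_) (fun p => ?_) hγ0 hγ1)
  · rw [hentry]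
    exact mul_nonneg (hP.1 p p'.1) (hx.1 p')
  · simp [hentry, Fintype.sum_prod_type, ← Finset.mul_sum, hx.2, hP.2 p]

theorem dOcc_eq_piMat_transpose_mulVec {P : Matrix (S × A) S ℝ} (hP : IsStochasticMat P)
    {γ : ℝ} (hγ0 : 0 ≤ γ) (hγ1 : γ < 1) (μ0 : S → ℝ) {x : S × A → ℝ} (hx : IsPolicy x) :
    dOcc P γ μ0 x = (piMat x)ᵀ *ᵥ ((1 - γ) • μ0 + γ • (Pᵀ *ᵥ dOcc P γ μ0 x)) := by
  have hunit : IsUnit (psiMat P γ x)ᵀ.det := by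
    rw [det_transpose]
    exact isUnit_det_psiMat hP hγ0 hγ1 hx
  have hbellman : (psiMat P γ x)ᵀ *ᵥ dOcc P γ μ0 x = (1 - γ) • ((piMat x)ᵀ *ᵥ μ0) := by
    rw [dOcc, mulVec_smul, mulVec_mulVec, mul_nonsing_inv _ hunit, one_mulVec]
  rw [psiMat, transpose_sub, transpose_one, transpose_smul, transpose_mul, sub_mulVec,
    one_mulVec, smul_mulVec, ← mulVec_mulVec, sub_eq_iff_eq_add] at hbellman
  rwa [mulVec_add, mulVec_smul, mulVec_smul]

theorem xiMat_mulVec_dOcc {P : Matrix (S × A) S ℝ} (hP : IsStochasticMat P)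
    {γ : ℝ} (hγ0 : 0 ≤ γ) (hγ1 : γ < 1) (μ0 : S → ℝ) {x : S × A → ℝ} (hx : IsPolicy x) :
    xiMat *ᵥ dOcc P γ μ0 x = (1 - γ) • μ0 + γ • (Pᵀ *ᵥ dOcc P γ μ0 x) := by
  conv_lhs => rw [dOcc_eq_piMat_transpose_mulVec hP hγ0 hγ1 μ0 hx]
  rw [mulVec_mulVec, xiMat_mul_piMat_transpose hx.2, one_mulVec]

theorem actor_objective_add_residual_eq (P : Matrix (S × A) S ℝ) (γ : ℝ) (μ0 : S → ℝ)
    (r q d x : S × A → ℝ) :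
    (1 - γ) * (μ0 ⬝ᵥ (piMat x *ᵥ q)) + d ⬝ᵥ (r - psiMat P γ x *ᵥ q)
      = d ⬝ᵥ (r - q) + ((1 - γ) • μ0 + γ • (Pᵀ *ᵥ d)) ⬝ᵥ (piMat x *ᵥ q) := by
  rw [psiMat, sub_mulVec, one_mulVec, smul_mulVec, ← mulVec_mulVec, dotProduct_sub,
    dotProduct_sub, dotProduct_smul, dotProduct_mulVec d P, ← mulVec_transpose, add_dotProduct,
    smul_dotProduct, smul_dotProduct, dotProduct_sub d r q]
  simp only [smul_eq_mul]
  ring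

end Occupancy

theorem actor_o_plus_fixed_occupancy_residual_general
    (P : Matrix (S × A) S ℝ) (hP : IsStochasticMat P)
    (γ : ℝ) (hγ0 : 0 ≤ γ) (hγ1 : γ < 1)
    (r : S × A → ℝ) (μ0 : S → ℝ)
    {n : ℕ} (π : (Fin n → ℝ) → S × A → ℝ)
    (hpol : ∀ θ, IsPolicy (π θ)) (hdiff : Differentiable ℝ π)
    (θ₀ : Fin n → ℝ) (q : S × A → ℝ) :
    ∀ i : Fin n,
      fderiv ℝ
        (fun t => (1 - γ) * (μ0 ⬝ᵥ (piMat (π t) *ᵥ q))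
          + dOcc P γ μ0 (π θ₀) ⬝ᵥ (r - psiMat P γ (π t) *ᵥ q)) θ₀ (Pi.single i 1)
      = (((Matrix.of fun j p' => fderiv ℝ π θ₀ (Pi.single j 1) p')
            * Matrix.diagonal (xiMatᵀ *ᵥ (xiMat *ᵥ dOcc P γ μ0 (π θ₀)))) *ᵥ q) i ∧
      fderiv ℝ
        (fun t => (1 - γ) * (μ0 ⬝ᵥ (piMat (π t) *ᵥ q))
          + dOcc P γ μ0 (π θ₀) ⬝ᵥ (r - psiMat P γ (π t) *ᵥ q)) θ₀ (Pi.single i 1)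
      = ∑ s : S, (xiMat *ᵥ dOcc P γ μ0 (π θ₀)) s *
          ∑ a : A, q (s, a) * fderiv ℝ π θ₀ (Pi.single i 1) (s, a) := by
  intro i
  set d := dOcc P γ μ0 (π θ₀)
  set dS := xiMat *ᵥ d
  set u := fderiv ℝ π θ₀ (Pi.single i 1)
  have hflow : dS = (1 - γ) • μ0 + γ • (Pᵀ *ᵥ d) :=
    xiMat_mulVec_dOcc hP hγ0 hγ1 μ0 (hpol θ₀)
  have hgrad : fderiv ℝ (fun t => (1 - γ) * (μ0 ⬝ᵥ (piMat (π t) *ᵥ q))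
      + d ⬝ᵥ (r - psiMat P γ (π t) *ᵥ q)) θ₀ (Pi.single i 1) = (xiMatᵀ *ᵥ dS * q) ⬝ᵥ u := by
    have hobj : (fun t => (1 - γ) * (μ0 ⬝ᵥ (piMat (π t) *ᵥ q))
        + d ⬝ᵥ (r - psiMat P γ (π t) *ᵥ q)) = fun t => d ⬝ᵥ (r - q) + (xiMatᵀ *ᵥ dS * q) ⬝ᵥ π t :=
      funext fun t => by rw [actor_objective_add_residual_eq, ← hflow, dotProduct_piMat_mulVec]
    rw [hobj]
    exact fderiv_const_add_dotProduct_apply (hdiff θ₀) _ _ _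
  refine ⟨?_, ?_⟩
  · rw [hgrad]
    -- the product in the statement elaborates through the `CStarMatrix` instance, so `Matrix`
    -- rewrite lemmas such as `mul_diagonal` do not fire; unfold it entrywise instead
    change _ = ∑ p, (∑ p', u p' * diagonal (xiMatᵀ *ᵥ dS) p' p) * q p
    simp only [diagonal_apply, mul_ite, mul_zero, Finset.sum_ite_eq', Finset.mem_univ, if_true,
      dotProduct, Pi.mul_apply]
    exact Finset.sum_congr rfl fun p _ => by ring
  · rw [hgrad]
    simp only [dotProduct, Pi.mul_apply, xiMat_transpose_mulVec_apply, Fintype.sum_prod_type,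
      Finset.mul_sum]
    exact Finset.sum_congr rfl fun s _ => Finset.sum_congr rfl fun a _ => by ring

/-- with the occupancy `d = d_{θ₀}` held fixed, the gradient at `θ₀` of
`θ ↦ (1-γ)μ0ᵀΠ_θ q + dᵀ(r - Ψ_θ q)` equals the classical actor-critic gradient
`H_{θ₀} Δ(Ξᵀ d_{S,θ₀}) q = Σ_s d_{S,θ₀}(s) Σ_a q(s,a) ∇_θ π_θ(s,a)`. -/
theorem actor_o_plus_fixed_occupancy_residual
    (P : Matrix (S × A) S ℝ) (hP : IsStochasticMat P)
    (γ : ℝ) (hγ0 : 0 ≤ γ) (hγ1 : γ < 1)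
    (r : S × A → ℝ) (μ0 : S → ℝ) (hμ0 : IsProbVec μ0)
    {n : ℕ} (π : (Fin n → ℝ) → S × A → ℝ)
    (hpol : ∀ θ, IsPolicy (π θ)) (hdiff : Differentiable ℝ π)
    (θ₀ : Fin n → ℝ) (q : S × A → ℝ) :
    ∀ i : Fin n,
      fderiv ℝ
        (fun t => (1 - γ) * (μ0 ⬝ᵥ (piMat (π t) *ᵥ q))
          + dOcc P γ μ0 (π θ₀) ⬝ᵥ (r - psiMat P γ (π t) *ᵥ q)) θ₀ (Pi.single i 1)
      = (((Matrix.of fun j p' => fderiv ℝ π θ₀ (Pi.single j 1) p')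
            * Matrix.diagonal (xiMatᵀ *ᵥ (xiMat *ᵥ dOcc P γ μ0 (π θ₀)))) *ᵥ q) i ∧
      fderiv ℝ
        (fun t => (1 - γ) * (μ0 ⬝ᵥ (piMat (π t) *ᵥ q))
          + dOcc P γ μ0 (π θ₀) ⬝ᵥ (r - psiMat P γ (π t) *ᵥ q)) θ₀ (Pi.single i 1)
      = ∑ s : S, (xiMat *ᵥ dOcc P γ μ0 (π θ₀)) s *
          ∑ a : A, q (s, a) * fderiv ℝ π θ₀ (Pi.single i 1) (s, a) :=
  actor_o_plus_fixed_occupancy_residual_general P hP γ hγ0 hγ1 r μ0 π hpol hdiff θ₀ q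
end
end
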